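/- Fixed point of the error recursion: let 𝒳 ∈ (0,∞), 𝒴 ∈ [0,1), Ξ ≥ 0 with 𝒳 < (1−𝒴)². Define ε_M = 0 and backwards ε_k = sqrt(𝒳·(ε_{k+1}² + Ξ)) + 𝒴·ε_{k+1}. Then the sequence (ε_k) (indexed by decreasing k, i.e., increasing number of iterations) is monotone nondecreasing in the iteration count and converges, as the number of iterations tends to infinity, to L = sqrt( Ξ / ((1−𝒴)²/𝒳 − 1) ). -/

import Mathlib

open Filter Set Topology

/-!
The map `g x = √(𝒳 (x² + Ξ)) + 𝒴 x` is monotone on `[0, ∞)`, so its iterates from `0` increase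
and stay below every nonnegative fixed point. By continuity the limit is a fixed point, and on
`[0, ∞)` the equation `g x = x` squares to `(1 - 𝒴)² x² = 𝒳 (x² + Ξ)`, whose only nonnegative
root is `L`.
-/

section Recurrence

variable {α : Type*} {f : α → α} {s : Set α} {e : ℕ → α}

theorem mem_of_recurrence (hmaps : MapsTo f s s) (he0 : e 0 ∈ s)
    (hrec : ∀ n, e (n + 1) = f (e n)) (n : ℕ) : e n ∈ s := by
  induction n with
  | zero => exact he0
  | succ n ih => exact hrec n ▸ hmaps ih

variable [Preorder α]

theorem monotone_of_recurrence (hf : MonotoneOn f s) (hmaps : MapsTo f s s) (he0 : e 0 ∈ s)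
    (hle : e 0 ≤ f (e 0)) (hrec : ∀ n, e (n + 1) = f (e n)) : Monotone e := by
  have hmem := mem_of_recurrence hmaps he0 hrec
  refine monotone_nat_of_le_succ fun n => ?_
  induction n with
  | zero => exact (hrec 0).symm ▸ hle
  | succ n ih =>
    calc e (n + 1) = f (e n) := hrec n
      _ ≤ f (e (n + 1)) := hf (hmem n) (hmem (n + 1)) ih
      _ = e (n + 1 + 1) := (hrec (n + 1)).symm

theorem le_fixedPt_of_recurrence {L : α} (hf : MonotoneOn f s) (hmaps : MapsTo f s s)
    (he0 : e 0 ∈ s) (hL : L ∈ s) (hfix : f L = L) (he0L : e 0 ≤ L)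
    (hrec : ∀ n, e (n + 1) = f (e n)) (n : ℕ) : e n ≤ L := by
  induction n with
  | zero => exact he0L
  | succ n ih =>
    rw [hrec n, ← hfix]
    exact hf (mem_of_recurrence hmaps he0 hrec n) hL ih

end Recurrence

theorem monotone_tendsto_of_recurrence_of_unique_fixedPt {f : ℝ → ℝ} {s : Set ℝ} {e : ℕ → ℝ}
    {L : ℝ} (hf : MonotoneOn f s) (hcont : Continuous f) (hmaps : MapsTo f s s) (hs : IsClosed s)
    (hfix : ∀ x ∈ s, f x = x ↔ x = L) (hL : L ∈ s) (he0 : e 0 ∈ s) (he0L : e 0 ≤ L)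
    (hle : e 0 ≤ f (e 0)) (hrec : ∀ n, e (n + 1) = f (e n)) :
    Monotone e ∧ Tendsto e atTop (𝓝 L) := by
  have hmono := monotone_of_recurrence hf hmaps he0 hle hrec
  have hbdd : BddAbove (range e) := by
    refine ⟨L, forall_mem_range.2 fun n => ?_⟩
    exact le_fixedPt_of_recurrence hf hmaps he0 hL ((hfix L hL).2 rfl) he0L hrec n
  have hlim := tendsto_atTop_ciSup hmono hbdd
  have hmem : ⨆ n, e n ∈ s :=
    hs.mem_of_tendsto hlim (Eventually.of_forall (mem_of_recurrence hmaps he0 hrec))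
  have hlim_succ : Tendsto (fun n => e (n + 1)) atTop (𝓝 (⨆ n, e n)) :=
    hlim.comp (tendsto_add_atTop_nat 1)
  have hfix_sup : f (⨆ n, e n) = ⨆ n, e n := by
    refine tendsto_nhds_unique ?_ hlim_succ
    simpa only [hrec, Function.comp_def] using (hcont.tendsto _).comp hlim
  rw [← (hfix _ hmem).1 hfix_sup]
  exact ⟨hmono, hlim⟩

section ErrorMap

variable {X Y Ξ : ℝ}

noncomputable def errorMap (X Y Ξ : ℝ) (x : ℝ) : ℝ := √(X * (x ^ 2 + Ξ)) + Y * x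

theorem continuous_errorMap : Continuous (errorMap X Y Ξ) := by
  unfold errorMap; fun_prop

theorem errorMap_nonneg (hY : 0 ≤ Y) {x : ℝ} (hx : 0 ≤ x) : 0 ≤ errorMap X Y Ξ x :=
  add_nonneg (Real.sqrt_nonneg _) (mul_nonneg hY hx)

theorem mapsTo_errorMap (hY : 0 ≤ Y) : MapsTo (errorMap X Y Ξ) (Ici 0) (Ici 0) :=
  fun _ hx => errorMap_nonneg hY hx

theorem monotoneOn_errorMap (hX : 0 ≤ X) (hY : 0 ≤ Y) : MonotoneOn (errorMap X Y Ξ) (Ici 0) := by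
  intro a ha b _ hab
  have hsq : a ^ 2 ≤ b ^ 2 := pow_le_pow_left₀ ha hab 2
  unfold errorMap
  gcongr

theorem errorMap_eq_self_iff (hX : 0 < X) (hXY : X < (1 - Y) ^ 2) (hY : Y < 1) (hΞ : 0 ≤ Ξ)
    {x : ℝ} (hx : 0 ≤ x) : errorMap X Y Ξ x = x ↔ x = √(Ξ / ((1 - Y) ^ 2 / X - 1)) := by
  have hD : 0 < (1 - Y) ^ 2 / X - 1 := by rwa [sub_pos, one_lt_div hX]
  have hrhs : 0 ≤ (1 - Y) * x := mul_nonneg (by linarith) hx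
  calc errorMap X Y Ξ x = x ↔ √(X * (x ^ 2 + Ξ)) = (1 - Y) * x := by
        unfold errorMap; constructor <;> intro h <;> linarith
    _ ↔ X * (x ^ 2 + Ξ) = ((1 - Y) * x) ^ 2 := Real.sqrt_eq_iff_eq_sq (by positivity) hrhs
    _ ↔ x ^ 2 = Ξ / ((1 - Y) ^ 2 / X - 1) := by
        rw [eq_div_iff hD.ne']; field_simp; constructor <;> intro h <;> linarith
    _ ↔ x = √(Ξ / ((1 - Y) ^ 2 / X - 1)) := by
        rw [eq_comm (a := x), Real.sqrt_eq_iff_eq_sq (div_nonneg hΞ hD.le) hx, eq_comm]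
end ErrorMap

/-- Fixed point of the error-accumulation recursion: with `𝒳 ∈ (0, (1−𝒴)²)`,
`𝒴 ∈ [0,1)`, `Ξ ≥ 0`, the sequence generated from `ε₀ = 0` by
`ε_{n+1} = sqrt(𝒳(ε_n² + Ξ)) + 𝒴 ε_n` is monotone nondecreasing in the iteration
count and converges to `L = sqrt(Ξ / ((1−𝒴)²/𝒳 − 1))`. -/
theorem stmt9 (X Y Ξ : ℝ) (hX : 0 < X) (hXY : X < (1 - Y) ^ 2)
    (hY0 : 0 ≤ Y) (hY1 : Y < 1) (hΞ : 0 ≤ Ξ)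
    (e : ℕ → ℝ) (h0 : e 0 = 0)
    (hrec : ∀ n, e (n + 1) = Real.sqrt (X * ((e n) ^ 2 + Ξ)) + Y * e n) :
    Monotone e ∧
      Tendsto e atTop (nhds (Real.sqrt (Ξ / ((1 - Y) ^ 2 / X - 1)))) :=
  monotone_tendsto_of_recurrence_of_unique_fixedPt (f := errorMap X Y Ξ)
    (monotoneOn_errorMap hX.le hY0) continuous_errorMap (mapsTo_errorMap hY0) isClosed_Ici
    (fun _ hx => errorMap_eq_self_iff hX hXY hY1 hΞ hx) (Real.sqrt_nonneg _)
    (h0 ▸ self_mem_Ici) (h0 ▸ Real.sqrt_nonneg _) (h0 ▸ errorMap_nonneg hY0 le_rfl) hrec
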